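/- arXiv:1908.08817 — 2 statements merged into one kernel-verified Lean document; each statement's English description precedes it below -/
import Mathlib

section
/- Let k ≥ 2 and d ≥ (k+2)² be integers. Then K(d,k) > 2(d−1)k. -/
/-- Cyclic distance between two indices on a cycle of length `N`. -/
def cycDist {N : ℕ} (i j : ZMod N) : ℕ := min (j - i).val (i - j).val

/-- A `(d,k)` circuit code of length `N`: a simple cycle `x₁,…,x_N` in the
`d`-dimensional hypercube graph `I(d)` (vertices are binary vectors of length
`d`, adjacency is Hamming distance `1`, and the graph distance in `I(d)` equals
the Hamming distance) such that for any two vertices of the cycle the graph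
distance is at least the minimum of their distance along the cycle and `k`. -/
def IsCircuitCode (d k N : ℕ) (x : ZMod N → (Fin d → Bool)) : Prop :=
  3 ≤ N ∧ Function.Injective x ∧
    (∀ i : ZMod N, hammingDist (x i) (x (i + 1)) = 1) ∧
    (∀ i j : ZMod N, min (cycDist i j) k ≤ hammingDist (x i) (x j))

/-- `K d k`: the maximum length of a `(d,k)` circuit code. -/
noncomputable def K (d k : ℕ) : ℕ :=
  sSup {N | ∃ x : ZMod N → (Fin d → Bool), IsCircuitCode d k N x}

/-!
Interleave two "ring" codes: the cycle of length `2m` in `I(m)` in which two words at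
cyclic distance `δ` differ in exactly `δ` coordinates. Running rings of lengths `2hp` and
`2hq` (`p`, `q` coprime) on disjoint blocks of coordinates and advancing them alternately
gives a closed walk of length `4hpq` in `I(h(p+q))`. Between steps `s` and `s'` the rings
advance by `a₁`, `a₂` with `a₁ + a₂ = s' - s` and `|a₁ - a₂| ≤ 1`, and the distance of the
words is the sum of the two cyclic distances. Either the nearest multiples of `2hp` and
`2hq` to `a₁`, `a₂` coincide, hence are a multiple of `2hpq`, and then the cyclic distance of
`s, s'` modulo `4hpq` is at most that sum; or they differ by a nonzero multiple of `2h`, and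
then the sum is at least `2h - 1 ≥ k`. For `q = p + 1`, `h = ⌊k/2⌋ + 1` and `p ≈ d/(2h)` the length
`4hp(p+1)` exceeds `2(d-1)k` as soon as `d ≥ (k+2)²`.
-/

open Finset

lemma hammingDist_append {β : Type*} [DecidableEq β] {m n : ℕ} (x x' : Fin m → β)
    (y y' : Fin n → β) :
    hammingDist (Fin.append x y) (Fin.append x' y') = hammingDist x x' + hammingDist y y' := by
  simp only [hammingDist, card_filter, Fin.sum_univ_add, Fin.append_left, Fin.append_right]

lemma cycDist_eq_natAbs_valMinAbs {N : ℕ} [NeZero N] (i j : ZMod N) :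
    cycDist i j = (j - i).valMinAbs.natAbs := by
  rw [cycDist, ZMod.valMinAbs_natAbs_eq_min, ← neg_sub j i, ZMod.neg_val]
  split_ifs with h <;> simp [h]

lemma card_filter_ringCode_ne (m a b : ℕ) (hab : a ≤ b) (hb : b < 2 * m) :
    #{j ∈ range m | ¬(j < a ∧ a ≤ j + m ↔ j < b ∧ b ≤ j + m)} = min (b - a) (2 * m - (b - a)) := by
  rcases le_or_gt (b - a) m with hδ | hδ
  · have hset : {j ∈ range m | ¬(j < a ∧ a ≤ j + m ↔ j < b ∧ b ≤ j + m)}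
        = Ico (a - m) (b - m) ∪ Ico a (min b m) := by
      ext j
      simp only [mem_filter, mem_range, mem_union, mem_Ico]
      omega
    rw [hset, card_union_of_disjoint, Nat.card_Ico, Nat.card_Ico]
    · omega
    · simp only [disjoint_left, mem_Ico]; intro j; omega
  · have hset : {j ∈ range m | ¬(j < a ∧ a ≤ j + m ↔ j < b ∧ b ≤ j + m)}
        = Ico (a - m) (min a m) ∪ Ico (b - m) (min b m) := by
      ext j
      simp only [mem_filter, mem_range, mem_union, mem_Ico]
      omega
    rw [hset, card_union_of_disjoint, Nat.card_Ico, Nat.card_Ico]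
    · omega
    · simp only [disjoint_left, mem_Ico]; intro j; omega

/-- The walk of length `2m` in `I(m)` that switches the coordinates on one by one and then
off in the same order. -/
def ringCode (m : ℕ) (τ : ZMod (2 * m)) : Fin m → Bool :=
  fun j => decide (j < τ.val ∧ τ.val ≤ j + m)

lemma hammingDist_ringCode {m : ℕ} [NeZero m] (τ τ' : ZMod (2 * m)) :
    hammingDist (ringCode m τ) (ringCode m τ') = (τ' - τ).valMinAbs.natAbs := by
  wlog h : τ.val ≤ τ'.val generalizing τ τ'
  · rw [hammingDist_comm, this τ' τ (by omega), ← ZMod.natAbs_valMinAbs_neg, neg_sub]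
  have hcard := card_filter_ringCode_ne m _ _ h τ'.val_lt
  rw [ZMod.valMinAbs_natAbs_eq_min, ZMod.val_sub h, ← hcard, hammingDist, card_filter, card_filter]
  simp only [ringCode, ne_eq, decide_eq_decide]
  exact Fin.sum_univ_eq_sum_range
    (fun j => if ¬(j < τ.val ∧ τ.val ≤ j + m ↔ j < τ'.val ∧ τ'.val ≤ j + m) then 1 else 0) m

lemma ZMod.natAbs_valMinAbs_one {n : ℕ} (hn : 2 ≤ n) : (1 : ZMod n).valMinAbs.natAbs = 1 := by
  rw [← Nat.cast_one, ZMod.valMinAbs_natCast_of_le_half (by omega)]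
  rfl

/-- The first ring advances at the steps `s → s + 1` with `s` even, the second at the others. -/
def interleavedCode (m n r s : ℕ) : Fin (m + n + r) → Bool :=
  Fin.append (Fin.append (ringCode m ((s + 1) / 2 : ℕ)) (ringCode n (s / 2 : ℕ))) fun _ => false

section interleavedCode

variable {m n : ℕ} (r : ℕ)

lemma hammingDist_interleavedCode [NeZero m] [NeZero n] (s s' : ℕ) :
    hammingDist (interleavedCode m n r s) (interleavedCode m n r s') =
      (((s' + 1) / 2 : ℕ) - ((s + 1) / 2 : ℕ) : ZMod (2 * m)).valMinAbs.natAbs +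
        ((s' / 2 : ℕ) - (s / 2 : ℕ) : ZMod (2 * n)).valMinAbs.natAbs := by
  rw [interleavedCode, interleavedCode, hammingDist_append, hammingDist_append, hammingDist_self,
    add_zero, hammingDist_ringCode, hammingDist_ringCode]

lemma hammingDist_interleavedCode_succ [NeZero m] [NeZero n] (s : ℕ) :
    hammingDist (interleavedCode m n r s) (interleavedCode m n r (s + 1)) = 1 := by
  have hm := NeZero.one_le (n := m)
  have hn := NeZero.one_le (n := n)
  rw [hammingDist_interleavedCode]
  obtain ⟨t, rfl | rfl⟩ := Nat.even_or_odd' s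
  · rw [show (2 * t + 1 + 1) / 2 = t + 1 by omega, show (2 * t + 1) / 2 = t by omega,
      show 2 * t / 2 = t by omega]
    push_cast
    simp [ZMod.natAbs_valMinAbs_one (show 2 ≤ 2 * m by omega)]
  · rw [show (2 * t + 1 + 1 + 1) / 2 = t + 1 by omega, show (2 * t + 1 + 1) / 2 = t + 1 by omega,
      show (2 * t + 1) / 2 = t by omega]
    push_cast
    simp [ZMod.natAbs_valMinAbs_one (show 2 ≤ 2 * n by omega)]

lemma interleavedCode_periodic {L : ℕ} (hm : 2 * m ∣ L) (hn : 2 * n ∣ L) :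
    Function.Periodic (interleavedCode m n r) (2 * L) := by
  intro s
  have hL₁ : ((L : ℕ) : ZMod (2 * m)) = 0 := (ZMod.natCast_eq_zero_iff _ _).2 hm
  have hL₂ : ((L : ℕ) : ZMod (2 * n)) = 0 := (ZMod.natCast_eq_zero_iff _ _).2 hn
  rw [interleavedCode, interleavedCode, show (s + 2 * L + 1) / 2 = (s + 1) / 2 + L by omega,
    show (s + 2 * L) / 2 = s / 2 + L by omega]
  push_cast
  rw [hL₁, hL₂, add_zero, add_zero]

end interleavedCode

lemma ZMod.natAbs_valMinAbs_le_of_dvd_sub {n : ℕ} [NeZero n] {a b : ℤ} (h : (n : ℤ) ∣ a - b) :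
    (a : ZMod n).valMinAbs.natAbs ≤ b.natAbs := by
  rw [← (ZMod.intCast_eq_intCast_iff_dvd_sub b a n).2 h]
  exact ZMod.natAbs_min_of_le_div_two n _ _ (ZMod.coe_valMinAbs _) (ZMod.natAbs_valMinAbs_le _)

lemma min_natAbs_valMinAbs_add_le {h p q k : ℕ} (hp : 0 < p) (hq : 0 < q) (hpq : p.Coprime q)
    (hk : k < 2 * h) {a₁ a₂ : ℤ} (ha : (a₁ - a₂).natAbs ≤ 1) :
    min ((a₁ + a₂ : ℤ) : ZMod (4 * h * p * q)).valMinAbs.natAbs k ≤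
      (a₁ : ZMod (2 * (h * p))).valMinAbs.natAbs + (a₂ : ZMod (2 * (h * q))).valMinAbs.natAbs := by
  set r₁ := (a₁ : ZMod (2 * (h * p))).valMinAbs
  set r₂ := (a₂ : ZMod (2 * (h * q))).valMinAbs
  obtain ⟨c₁, hc₁⟩ : ((2 * (h * p) : ℕ) : ℤ) ∣ a₁ - r₁ :=
    (ZMod.intCast_eq_intCast_iff_dvd_sub _ _ _).1 (ZMod.coe_valMinAbs _)
  obtain ⟨c₂, hc₂⟩ : ((2 * (h * q) : ℕ) : ℤ) ∣ a₂ - r₂ :=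
    (ZMod.intCast_eq_intCast_iff_dvd_sub _ _ _).1 (ZMod.coe_valMinAbs _)
  push_cast at hc₁ hc₂
  by_cases he : a₁ - r₁ = a₂ - r₂
  · apply min_le_of_left_le
    have : 0 < h := by omega
    have : NeZero (4 * h * p * q) := ⟨by positivity⟩
    obtain ⟨t, rfl⟩ : (q : ℤ) ∣ c₁ := by
      refine (Nat.isCoprime_iff_coprime.2 hpq.symm).dvd_of_dvd_mul_left ⟨c₂, ?_⟩
      have : (2 * h : ℤ) ≠ 0 := by omega
      apply mul_left_cancel₀ this
      linear_combination hc₂ - hc₁ + he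
    calc _ ≤ (r₁ + r₂).natAbs := ZMod.natAbs_valMinAbs_le_of_dvd_sub
            ⟨t, by push_cast; linear_combination 2 * hc₁ - he⟩
      _ ≤ _ := Int.natAbs_add_le _ _
  · apply min_le_of_right_le
    have hg : (2 * h : ℤ) ∣ (a₁ - r₁) - (a₂ - r₂) := ⟨p * c₁ - q * c₂, by rw [hc₁, hc₂]; ring⟩
    have := Int.natAbs_le_of_dvd_ne_zero hg (sub_ne_zero.2 he)
    omega

lemma min_le_hammingDist_interleavedCode {h p q k : ℕ} (r : ℕ) (hp : 0 < p) (hq : 0 < q)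
    (hpq : p.Coprime q) (hk : k < 2 * h) (s s' : ℕ) :
    min ((s' : ZMod (4 * h * p * q)) - s).valMinAbs.natAbs k ≤
      hammingDist (interleavedCode (h * p) (h * q) r s) (interleavedCode (h * p) (h * q) r s') := by
  have : NeZero h := ⟨by omega⟩
  have : NeZero p := ⟨hp.ne'⟩
  have : NeZero q := ⟨hq.ne'⟩
  have key := min_natAbs_valMinAbs_add_le hp hq hpq hk
    (a₁ := (((s' + 1) / 2 : ℕ) : ℤ) - ((s + 1) / 2 : ℕ)) (a₂ := ((s' / 2 : ℕ) : ℤ) - (s / 2 : ℕ))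
    (by omega)
  rw [show (((s' + 1) / 2 : ℕ) : ℤ) - ((s + 1) / 2 : ℕ) + (((s' / 2 : ℕ) : ℤ) - (s / 2 : ℕ))
    = (s' : ℤ) - s by omega] at key
  simp only [Int.cast_sub, Int.cast_natCast] at key
  rwa [hammingDist_interleavedCode]

lemma injective_of_min_cycDist_le {N k : ℕ} [NeZero N] {ι β : Type*} [Fintype ι] [DecidableEq β]
    (hk : 0 < k) {x : ZMod N → ι → β}
    (hx : ∀ i j, min (cycDist i j) k ≤ hammingDist (x i) (x j)) : Function.Injective x := by
  intro i j hij
  have hij := hx i j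
  rw [‹x i = x j›, hammingDist_self, cycDist_eq_natAbs_valMinAbs] at hij
  have : (j - i).valMinAbs = 0 := by omega
  rw [ZMod.valMinAbs_eq_zero, sub_eq_zero] at this
  exact this.symm

theorem isCircuitCode_interleavedCode {h p q k : ℕ} (r : ℕ) (hp : 0 < p) (hq : 0 < q)
    (hpq : p.Coprime q) (hk₀ : 0 < k) (hk : k < 2 * h) :
    IsCircuitCode (h * p + h * q + r) k (4 * h * p * q)
      (fun i => interleavedCode (h * p) (h * q) r i.val) := by
  have : NeZero h := ⟨by omega⟩
  have : NeZero p := ⟨hp.ne'⟩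
  have : NeZero q := ⟨hq.ne'⟩
  have hN : 4 ≤ 4 * h * p * q := by
    rw [mul_assoc, mul_assoc]
    exact Nat.le_mul_of_pos_right 4 (NeZero.pos _)
  have : NeZero (4 * h * p * q) := ⟨by omega⟩
  have hspread : ∀ i j : ZMod (4 * h * p * q), min (cycDist i j) k ≤
      hammingDist (interleavedCode (h * p) (h * q) r i.val)
        (interleavedCode (h * p) (h * q) r j.val) := by
    intro i j
    simpa [cycDist_eq_natAbs_valMinAbs] using
      min_le_hammingDist_interleavedCode r hp hq hpq hk i.val j.val
  have hper : Function.Periodic (interleavedCode (h * p) (h * q) r) (4 * h * p * q) := by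
    have := interleavedCode_periodic (m := h * p) (n := h * q) r (L := 2 * h * p * q)
      ⟨q, by ring⟩ ⟨p, by ring⟩
    rwa [show 2 * (2 * h * p * q) = 4 * h * p * q by ring] at this
  refine ⟨by omega, injective_of_min_cycDist_le hk₀ hspread, fun i => ?_, hspread⟩
  dsimp only
  rw [ZMod.val_add, ZMod.val_one_eq_one_mod, Nat.mod_eq_of_lt (show 1 < 4 * h * p * q by omega),
    hper.map_mod_nat]
  exact hammingDist_interleavedCode_succ r _

lemma IsCircuitCode.le_two_pow {d k N : ℕ} {x : ZMod N → Fin d → Bool}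
    (hx : IsCircuitCode d k N x) : N ≤ 2 ^ d := by
  have : NeZero N := ⟨by have := hx.1; omega⟩
  simpa using Fintype.card_le_of_injective x hx.2.1

lemma IsCircuitCode.le_K {d k N : ℕ} {x : ZMod N → Fin d → Bool} (hx : IsCircuitCode d k N x) :
    N ≤ K d k :=
  le_csSup ⟨2 ^ d, fun _ ⟨_, hy⟩ => hy.le_two_pow⟩ ⟨x, hx⟩

lemma exists_interleaving_params {k d : ℕ} (hd : (k + 2) ^ 2 ≤ d) :
    ∃ h p, 0 < p ∧ k < 2 * h ∧ h * p + h * (p + 1) ≤ d ∧ 2 * (d - 1) * k < 4 * h * p * (p + 1) := by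
  set h := k / 2 + 1
  have hh : k < 2 * h ∧ 2 * h ≤ k + 2 := by omega
  have hq : 2 * k + 4 ≤ d / h := by
    rw [Nat.le_div_iff_mul_le (by omega)]
    calc (2 * k + 4) * h = (k + 2) * (2 * h) := by ring
      _ ≤ (k + 2) * (k + 2) := Nat.mul_le_mul_left _ hh.2
      _ ≤ d := by rwa [← sq]
  set q := d / h
  set p := (q - 1) / 2
  have hqd : h * q ≤ d := Nat.mul_div_le d h
  have hdq : d < h * (2 * p + 3) :=
    (Nat.lt_mul_div_succ d (by omega)).trans_le (Nat.mul_le_mul_left _ (by omega))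
  have hp : k + 1 ≤ p := by omega
  refine ⟨h, p, by omega, hh.1, ?_, ?_⟩
  · calc h * p + h * (p + 1) = h * (2 * p + 1) := by ring
      _ ≤ h * q := Nat.mul_le_mul_left _ (by omega)
      _ ≤ d := hqd
  · have hkp : k * (2 * p + 3) < 2 * p * (p + 1) := by nlinarith
    calc 2 * (d - 1) * k ≤ 2 * (h * (2 * p + 3)) * k := by gcongr; omega
      _ = 2 * h * (k * (2 * p + 3)) := by ring
      _ < 2 * h * (2 * p * (p + 1)) := Nat.mul_lt_mul_of_pos_left hkp (by omega)
      _ = 4 * h * p * (p + 1) := by ring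

/-- For `k ≥ 2` and `d ≥ (k+2)²`, one has `K(d,k) > 2(d−1)k`. -/
theorem stmt_2 (k d : ℕ) (hk : 2 ≤ k) (hd : (k + 2) ^ 2 ≤ d) :
    2 * (d - 1) * k < K d k := by
  obtain ⟨h, p, hp, hkh, hdim, hlt⟩ := exists_interleaving_params hd
  obtain ⟨r, rfl⟩ := Nat.exists_eq_add_of_le hdim
  have hcoprime : p.Coprime (p + 1) := Nat.coprime_self_add_right.2 (Nat.coprime_one_right p)
  exact hlt.trans_le
    (isCircuitCode_interleavedCode r hp p.succ_pos hcoprime (by omega) hkh).le_K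
end

section
/- Fix an integer m ≥ 0 and define d_i := 2^i + 2i + m for i ≥ 1. Then every integer d ≥ 1 can be written as d = p + Σ_{i=1}^H ε_i d_i for some integer H ≥ 1, some integer p with 0 ≤ p < d₁ = m + 4, and coefficients ε_i ∈ {0,1}. -/
/-!
Greedy expansion: if `d ≥ d₁`, subtract the largest `d_i ≤ d`. Since `d_{i+1} ≤ 2 d_i`, the
remainder is smaller than `d_i`, so expanding it recursively never uses `d_i` again.
-/

open Finset

lemma StrictMono.exists_le_lt_succ {a : ℕ → ℕ} (ha : StrictMono a) {d : ℕ} (hd : a 1 ≤ d) :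
    ∃ i, 1 ≤ i ∧ a i ≤ d ∧ d < a (i + 1) := by
  classical
  have hex : ∃ n, d < a n := ⟨d + 1, (ha.id_le _).trans_lt' d.lt_succ_self⟩
  have hn : 1 < Nat.find hex := by
    by_contra! h
    exact (ha.monotone h).not_gt ((Nat.find_spec hex).trans_le' hd)
  refine ⟨Nat.find hex - 1, by omega, not_lt.1 (Nat.find_min hex (by omega)), ?_⟩
  rw [Nat.sub_add_cancel hn.le]
  exact Nat.find_spec hex

theorem exists_eq_add_sum_of_succ_le_two_mul {a : ℕ → ℕ} (ha : StrictMono a)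
    (h_double : ∀ i, 1 ≤ i → a (i + 1) ≤ 2 * a i) (d : ℕ) :
    ∃ S ⊆ Icc 1 d, ∃ p < a 1, d = p + ∑ j ∈ S, a j := by
  induction d using Nat.strong_induction_on with
  | _ d ih =>
  by_cases hd : d < a 1
  · exact ⟨∅, empty_subset _, d, hd, by simp⟩
  obtain ⟨i, hi, hid, hdi⟩ := ha.exists_le_lt_succ (not_lt.1 hd)
  have hi_pos : 0 < a i := (ha.id_le i).trans_lt' hi
  obtain ⟨S, hS, p, hp, hr⟩ := ih (d - a i) (by omega)
  have h_rem : d - a i < a i := by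
    have := h_double i hi
    omega
  have hiS : i ∉ S := fun hiS => by
    have := single_le_sum (fun j _ => Nat.zero_le (a j)) hiS
    omega
  refine ⟨insert i S, insert_subset ?_ (hS.trans (Icc_subset_Icc_right (by omega))), p, hp, ?_⟩
  · exact mem_Icc.2 ⟨hi, (ha.id_le i).trans hid⟩
  · rw [sum_insert hiS]
    omega

lemma strictMono_two_pow_add_two_mul_add (m : ℕ) :
    StrictMono fun i : ℕ => 2 ^ i + 2 * i + m :=
  strictMono_nat_of_lt_succ fun i => by
    have := Nat.pow_le_pow_right two_pos (Nat.le_succ i)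
    omega

lemma two_pow_add_two_mul_add_succ_le (m : ℕ) {i : ℕ} (hi : 1 ≤ i) :
    2 ^ (i + 1) + 2 * (i + 1) + m ≤ 2 * (2 ^ i + 2 * i + m) := by
  rw [pow_succ]
  omega

theorem stmt_12_general (m d : ℕ) :
    ∃ H : ℕ, 1 ≤ H ∧ ∃ p : ℕ, p < m + 4 ∧ ∃ ε : ℕ → ℕ,
      (∀ i, ε i = 0 ∨ ε i = 1) ∧
      d = p + ∑ i ∈ Finset.Icc 1 H, ε i * (2 ^ i + 2 * i + m) := by
  classical
  obtain ⟨S, hS, p, hp, hd⟩ := exists_eq_add_sum_of_succ_le_two_mul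
    (strictMono_two_pow_add_two_mul_add m) (fun _ => two_pow_add_two_mul_add_succ_le m) d
  have hS' : S ⊆ Icc 1 (d + 1) := hS.trans (Icc_subset_Icc_right (Nat.le_succ d))
  refine ⟨d + 1, Nat.le_add_left 1 d, p, by omega, fun i => if i ∈ S then 1 else 0,
    fun _ => (ite_eq_or_eq ..).symm, ?_⟩
  simp only [boole_mul, sum_ite_mem, inter_eq_right.2 hS']
  exact hd

/-- Fix `m ≥ 0` and set `d_i = 2^i + 2i + m`. Every integer `d ≥ 1` can be
written as `d = p + ∑_{i=1}^H ε_i d_i` with `H ≥ 1`, `0 ≤ p < d₁ = m + 4` and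
`ε_i ∈ {0,1}`. -/
theorem stmt_12 (m d : ℕ) (hd : 1 ≤ d) :
    ∃ H : ℕ, 1 ≤ H ∧ ∃ p : ℕ, p < m + 4 ∧ ∃ ε : ℕ → ℕ,
      (∀ i, ε i = 0 ∨ ε i = 1) ∧
      d = p + ∑ i ∈ Finset.Icc 1 H, ε i * (2 ^ i + 2 * i + m) :=
  stmt_12_general m d
end
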